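/- Let n ≥ 2 and let γ = ((i₁ j₁),…,(i_{n−1} j_{n−1})) ∈ Σ_n(n−1), i.e. a minimal factorisation of the n-cycle c into n−1 transpositions. Let l ∈ {1,…,n−1} be such that i_l = max{i₁,…,i_{n−1}} and l = max{s ∈ {1,…,n−1} : i_s = i_l}. Then j_l = i_l + 1. -/

import Mathlib

/-- ℓ(σ): the number of cycles (orbits) of σ, including fixed points, counted via the
minimal representative of each orbit. -/
noncomputable def cycleCount {n : ℕ} (σ : Equiv.Perm (Fin n)) : ℕ :=
  Set.ncard {x : Fin n | ∀ y, σ.SameCycle x y → x ≤ y}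

/-- |σ| := n − ℓ(σ). -/
noncomputable def normPerm {n : ℕ} (σ : Equiv.Perm (Fin n)) : ℕ := n - cycleCount σ

/-- σ₁ ≼ σ₂ iff |σ₂| = |σ₁| + |σ₁⁻¹σ₂|. -/
def precLe {n : ℕ} (σ₁ σ₂ : Equiv.Perm (Fin n)) : Prop :=
  normPerm σ₂ = normPerm σ₁ + normPerm (σ₁⁻¹ * σ₂)

/-- Σ_n(k): tuples of k transpositions with |τ₁⋯τ_k| = k and τ₁⋯τ_k ≼ (1 … n). -/
def SigmaSet (n k : ℕ) : Set (Fin k → Equiv.Perm (Fin n)) :=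
  {τ | (∀ l, (τ l).IsSwap) ∧ normPerm (List.ofFn τ).prod = k ∧
      precLe (List.ofFn τ).prod (finRotate n)}

/-- γ_m := τ₁∘⋯∘τ_m, the product of the first m entries of the chain. -/
def gammaP {n k : ℕ} (τ : Fin k → Equiv.Perm (Fin n)) (m : ℕ) : Equiv.Perm (Fin n) :=
  ((List.ofFn τ).take m).prod

/-!
Write `γ_s = τ₁ ⋯ τ_s`. A transposition changes the number of cycles by one, and the chain passes
from `n` cycles to the single cycle `c` in `n - 1` steps, so every `τ_s` joins two cycles of
`γ_{s-1}`. Undoing these joins backwards from `c` shows that, as for every permutation below `c`,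
the cycles of each `γ_s` are noncrossing and each runs through its elements in increasing order.

Let `m = i_l` and suppose `j_l > m + 1`. At the first `t` for which `m` and `m + 1` share a
cycle of `γ_t`, these increasing cycles give `γ_t m = m + 1`, so `τ_t` moves `m`. If `t < l`,
both `γ_{l-1}` and `γ_l` send `m` to `m + 1`, forcing `j_l = m`. If `t = l`, then
`γ_{l-1} j_l = m + 1 < j_l` makes `m + 1` the least element of a nontrivial cycle, yet every such
cycle contains some `i_r ≤ m`. If `t > l`, then `m = j_t`, and the cycle of `i_t < m` through
`m + 1` crosses the cycle of `m` through `j_l`.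
-/

open Equiv Equiv.Perm Set

namespace Equiv.Perm

variable {α : Type*} {σ : Perm α} {a b x y : α}

theorem SameCycle.mem_of_mapsTo [Finite α] {S : Set α} (h : σ.SameCycle x y)
    (hS : MapsTo σ S S) (hx : x ∈ S) : y ∈ S := by
  obtain ⟨k, -, rfl⟩ := h.exists_pow_eq'
  rw [coe_pow]
  exact hS.iterate k hx

variable [DecidableEq α]

theorem mapsTo_mul_swap {S : Set α} (hS : MapsTo σ S S) (hab : a ∈ S ↔ b ∈ S) :
    MapsTo (σ * swap a b) S S := by
  intro z hz
  rw [mul_apply]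
  apply hS
  rcases eq_or_ne z a with rfl | hza
  · rwa [swap_apply_left, ← hab]
  rcases eq_or_ne z b with rfl | hzb
  · rwa [swap_apply_right, hab]
  rwa [swap_apply_of_ne_of_ne hza hzb]

theorem SameCycle.of_mul_swap [Finite α] (h : (σ * swap a b).SameCycle x y) :
    σ.SameCycle x y ∨ σ.SameCycle x a ∧ σ.SameCycle b y ∨
      σ.SameCycle x b ∧ σ.SameCycle a y := by
  let T : Set α := {z | σ.SameCycle x z ∨ σ.SameCycle x a ∧ σ.SameCycle b z ∨
    σ.SameCycle x b ∧ σ.SameCycle a z}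
  have hT : MapsTo σ T T := fun z hz => by
    simpa only [T, mem_ofPred_eq, sameCycle_apply_right] using hz
  have hab : a ∈ T ↔ b ∈ T := by
    have := SameCycle.refl σ a
    have := SameCycle.refl σ b
    simp only [T, mem_ofPred_eq]
    tauto
  exact h.mem_of_mapsTo (mapsTo_mul_swap hT hab) (Or.inl (SameCycle.refl σ x))

theorem sameCycle_mul_swap [Finite α] (h : ¬ σ.SameCycle a b) :
    (σ * swap a b).SameCycle a b := by
  by_contra h'
  let Y : Set α := {z | σ.SameCycle b z ∧ (σ * swap a b).SameCycle a z}
  have hY : MapsTo σ Y Y := by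
    rintro z ⟨hbz, haz⟩
    have hza : z ≠ a := by rintro rfl; exact h hbz.symm
    have hzb : z ≠ b := by rintro rfl; exact h' haz
    have hσz : σ z = (σ * swap a b) z := by rw [mul_apply, swap_apply_of_ne_of_ne hza hzb]
    exact ⟨sameCycle_apply_right.2 hbz, hσz ▸ sameCycle_apply_right.2 haz⟩
  have hσb : σ b ∈ Y := by
    refine ⟨sameCycle_apply_right.2 (SameCycle.refl σ b), ?_⟩
    have hσb : σ b = (σ * swap a b) a := by rw [mul_apply, swap_apply_left]
    exact hσb ▸ sameCycle_apply_right.2 (SameCycle.refl _ a)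
  exact h' ((sameCycle_apply_left.2 (SameCycle.refl σ b)).mem_of_mapsTo hY hσb).2

theorem SameCycle.mul_swap [Finite α] (h : ¬ σ.SameCycle a b) (hxy : σ.SameCycle x y) :
    (σ * swap a b).SameCycle x y := by
  let S : Set α := {z | (σ * swap a b).SameCycle x z}
  have hS : MapsTo (σ * swap a b) S S := fun z hz => sameCycle_apply_right.2 hz
  have hab : a ∈ S ↔ b ∈ S :=
    ⟨fun ha => ha.trans (sameCycle_mul_swap h), fun hb => hb.trans (sameCycle_mul_swap h).symm⟩
  have hσS := mapsTo_mul_swap hS hab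
  rw [mul_assoc, swap_mul_self, mul_one] at hσS
  exact hxy.mem_of_mapsTo hσS (SameCycle.refl _ x)

end Equiv.Perm

section CycleCount

variable {n : ℕ} {σ : Perm (Fin n)} {a b : Fin n}

def cycleMins (σ : Perm (Fin n)) : Set (Fin n) := {x | ∀ y, σ.SameCycle x y → x ≤ y}

theorem cycleCount_eq_ncard_cycleMins (σ : Perm (Fin n)) :
    cycleCount σ = (cycleMins σ).ncard := rfl

theorem exists_cycleMin (σ : Perm (Fin n)) (a : Fin n) :
    ∃ u, σ.SameCycle a u ∧ ∀ z, σ.SameCycle a z → u ≤ z := by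
  obtain ⟨u, hu, hmin⟩ := exists_min_image {z | σ.SameCycle a z} id (toFinite _)
    ⟨a, SameCycle.refl σ a⟩
  exact ⟨u, hu, hmin⟩

theorem cycleMins_subset_insert_mul_swap {u w : Fin n}
    (hu : σ.SameCycle a u ∧ ∀ z, σ.SameCycle a z → u ≤ z)
    (hw : σ.SameCycle b w ∧ ∀ z, σ.SameCycle b z → w ≤ z) (huw : u ≤ w) :
    cycleMins σ ⊆ insert w (cycleMins (σ * swap a b)) := by
  intro x hx
  rcases eq_or_ne x w with rfl | hxw
  · exact mem_insert _ _
  refine mem_insert_of_mem _ fun y hy => ?_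
  rcases hy.of_mul_swap with hxy | ⟨hxa, hby⟩ | ⟨hxb, -⟩
  · exact hx y hxy
  · exact (hx u (hxa.trans hu.1)).trans (huw.trans (hw.2 y hby))
  · exact absurd (le_antisymm (hx w (hxb.trans hw.1)) (hw.2 x hxb.symm)) hxw

theorem cycleCount_le_cycleCount_mul_swap_add_one (σ : Perm (Fin n)) (a b : Fin n) :
    cycleCount σ ≤ cycleCount (σ * swap a b) + 1 := by
  obtain ⟨u, hu⟩ := exists_cycleMin σ a
  obtain ⟨w, hw⟩ := exists_cycleMin σ b
  wlog huw : u ≤ w generalizing a b u w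
  · rw [swap_comm]
    exact this b a w hw u hu (le_of_not_ge huw)
  rw [cycleCount_eq_ncard_cycleMins, cycleCount_eq_ncard_cycleMins]
  exact (ncard_le_ncard (cycleMins_subset_insert_mul_swap hu hw huw)).trans (ncard_insert_le _ _)

theorem cycleCount_le_cycleCount_mul_swap (h : σ.SameCycle a b) :
    cycleCount σ ≤ cycleCount (σ * swap a b) := by
  refine ncard_le_ncard fun x hx y hy => ?_
  rcases hy.of_mul_swap with hxy | ⟨hxa, hby⟩ | ⟨hxb, hay⟩
  · exact hx y hxy
  · exact hx y ((hxa.trans h).trans hby)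
  · exact hx y ((hxb.trans h.symm).trans hay)

theorem cycleCount_le_card (σ : Perm (Fin n)) : cycleCount σ ≤ n := by
  simpa [cycleCount_eq_ncard_cycleMins, ncard_univ] using ncard_le_ncard (subset_univ (cycleMins σ))

theorem cycleCount_one : cycleCount (1 : Perm (Fin n)) = n := by
  have : cycleMins (1 : Perm (Fin n)) = univ :=
    eq_univ_of_forall fun x y hxy => (sameCycle_one.1 hxy).le
  simp [cycleCount_eq_ncard_cycleMins, this, ncard_univ]

theorem eq_one_of_cycleCount_eq_card (h : cycleCount σ = n) : σ = 1 := by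
  have hmins : cycleMins σ = univ :=
    eq_of_subset_of_ncard_le (subset_univ _)
      (by simpa [ncard_univ, ← cycleCount_eq_ncard_cycleMins] using h.ge)
  have hmin (x : Fin n) : x ∈ cycleMins σ := hmins ▸ mem_univ x
  ext x
  exact congrArg Fin.val <| le_antisymm
    (hmin (σ x) x (sameCycle_apply_left.2 (SameCycle.refl σ x)))
    (hmin x (σ x) (sameCycle_apply_right.2 (SameCycle.refl σ x)))

theorem sameCycle_finRotate (hn : 2 ≤ n) (x y : Fin n) : (finRotate n).SameCycle x y := by
  have hmoved (z : Fin n) : finRotate n z ≠ z := by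
    rw [← mem_support, support_finRotate_of_le hn]
    exact Finset.mem_univ z
  exact (isCycle_finRotate_of_le hn).sameCycle (hmoved x) (hmoved y)

theorem cycleCount_finRotate (hn : 2 ≤ n) : cycleCount (finRotate n) = 1 := by
  obtain ⟨m, rfl⟩ : ∃ m, n = m + 2 := ⟨n - 2, by omega⟩
  have : cycleMins (finRotate (m + 2)) = {0} := by
    ext x
    simp only [cycleMins, mem_ofPred_eq, mem_singleton_iff]
    refine ⟨fun hx => Fin.le_zero_iff.1 (hx 0 (sameCycle_finRotate hn x 0)), ?_⟩
    rintro rfl y -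
    exact Fin.zero_le y
  rw [cycleCount_eq_ncard_cycleMins, this, ncard_singleton]

theorem eq_of_precLe_of_normPerm_eq {c : Perm (Fin n)} (hc : cycleCount c = 1)
    (hσ : normPerm σ = n - 1) (h : precLe σ c) : σ = c := by
  have hquot : cycleCount (σ⁻¹ * c) = n := by
    have := cycleCount_le_card (σ⁻¹ * c)
    unfold precLe normPerm at h
    unfold normPerm at hσ
    omega
  rw [← mul_inv_cancel_left σ c, eq_one_of_cycleCount_eq_card hquot, mul_one]

end CycleCount

section Noncrossing

variable {n : ℕ}

/-- Every cycle of `σ` has the form `(x₁ x₂ … x_r)` with `x₁ < x₂ < ⋯ < x_r`. -/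
def HasIncreasingCycles (σ : Perm (Fin n)) : Prop :=
  ∀ x y, σ.SameCycle x y → (x < y → x < σ x ∧ σ x ≤ y) ∧ (σ x ≤ x → σ x ≤ y)

def HasNoncrossingCycles (σ : Perm (Fin n)) : Prop :=
  ∀ a x b y, σ.SameCycle a b → σ.SameCycle x y → a < x → x < b → b < y → σ.SameCycle a x

theorem hasIncreasingCycles_finRotate (hn : 2 ≤ n) : HasIncreasingCycles (finRotate n) := by
  obtain ⟨m, rfl⟩ : ∃ m, n = m + 2 := ⟨n - 2, by omega⟩
  intro x y _
  rw [finRotate_apply]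
  have hx := Fin.val_add_one x
  have hy := y.isLt
  refine ⟨fun hxy => ?_, fun hwrap => ?_⟩
  · have hxlast : x ≠ Fin.last (m + 1) := (hxy.trans_le (Fin.le_last y)).ne
    rw [if_neg hxlast] at hx
    rw [Fin.lt_def, Fin.le_def, hx]
    rw [Fin.lt_def] at hxy
    omega
  · split_ifs at hx with hxlast
    · rw [Fin.le_def, hx]
      omega
    · rw [Fin.le_def, hx] at hwrap
      omega

theorem hasNoncrossingCycles_finRotate (hn : 2 ≤ n) : HasNoncrossingCycles (finRotate n) :=
  fun a x _ _ _ _ _ _ _ => sameCycle_finRotate hn a x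

variable {σ : Perm (Fin n)} {a b x y z : Fin n}

theorem HasIncreasingCycles.apply_eq_of_val_eq_succ (hinc : HasIncreasingCycles σ)
    (h : σ.SameCycle x y) (hy : (y : ℕ) = x + 1) : σ x = y := by
  obtain ⟨h1, h2⟩ := (hinc x y h).1 (Fin.lt_def.2 (by omega))
  rw [Fin.lt_def] at h1
  rw [Fin.le_def] at h2
  exact Fin.ext (by omega)

theorem HasIncreasingCycles.mem_Ioc_of_sameCycle_right (hinc : HasIncreasingCycles (σ * swap a b))
    (hab : a < b) (h : ¬ σ.SameCycle a b) (hz : σ.SameCycle b z) : z ∈ Ioc a b := by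
  let I : Set (Fin n) := {z | (σ * swap a b).SameCycle a z ∧ z ∈ Ioc a b}
  have hI : MapsTo σ I I := by
    rintro z ⟨haz, hza, hzb⟩
    rcases hzb.eq_or_lt with rfl | hzb
    · have hσz : σ z = (σ * swap a z) a := by rw [mul_apply, swap_apply_left]
      rw [hσz]
      exact ⟨sameCycle_apply_right.2 (SameCycle.refl _ a), (hinc a z haz).1 hza⟩
    · have hσz : σ z = (σ * swap a b) z := by
        rw [mul_apply, swap_apply_of_ne_of_ne hza.ne' hzb.ne]
      obtain ⟨hz1, hz2⟩ := (hinc z b (haz.symm.trans (sameCycle_mul_swap h))).1 hzb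
      rw [hσz]
      exact ⟨sameCycle_apply_right.2 haz, hza.trans hz1, hz2⟩
  exact (hz.mem_of_mapsTo hI ⟨sameCycle_mul_swap h, hab, le_rfl⟩).2

theorem HasIncreasingCycles.notMem_Ioc_of_sameCycle_left (hinc : HasIncreasingCycles (σ * swap a b))
    (hab : a < b) (h : ¬ σ.SameCycle a b) (hz : σ.SameCycle a z) : z ∉ Ioc a b := by
  set σ' := σ * swap a b
  let O : Set (Fin n) := {z | σ'.SameCycle a z ∧ z ∉ Ioc a b}
  have hO : MapsTo σ O O := by
    rintro z ⟨haz, hzI⟩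
    rcases eq_or_ne z a with rfl | hza
    · have hσz : σ z = σ' b := by rw [mul_apply, swap_apply_right]
      have hzb := sameCycle_mul_swap h
      refine ⟨hσz ▸ hzb.trans (sameCycle_apply_right.2 (SameCycle.refl _ b)), ?_⟩
      rw [hσz, mem_Ioc, not_and_or, not_lt, not_le]
      exact (le_or_gt (σ' b) b).imp (hinc b z hzb.symm).2 id
    · have hzb : z ≠ b := by rintro rfl; exact hzI ⟨hab, le_rfl⟩
      have hσz : σ z = σ' z := by rw [mul_apply, swap_apply_of_ne_of_ne hza hzb]
      refine ⟨hσz ▸ sameCycle_apply_right.2 haz, ?_⟩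
      rw [hσz, mem_Ioc, not_and_or, not_lt, not_le]
      rw [mem_Ioc, not_and_or, not_lt, not_le] at hzI
      rcases le_or_gt (σ' z) z with hwrap | hzσ
      · exact Or.inl ((hinc z a haz.symm).2 hwrap)
      · rcases hzI with hzI | hbz
        · exact Or.inl ((hinc z a haz.symm).1 (hzI.lt_of_ne hza)).2
        · exact Or.inr (hbz.trans hzσ)
  exact (hz.mem_of_mapsTo hO ⟨SameCycle.refl _ a, fun ha => ha.1.false⟩).2

theorem HasIncreasingCycles.of_mul_swap (hinc : HasIncreasingCycles (σ * swap a b))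
    (hab : a < b) (h : ¬ σ.SameCycle a b) : HasIncreasingCycles σ := by
  intro x y hxy
  have hxy' := hxy.mul_swap h
  rcases eq_or_ne x a with rfl | hxa
  · have hby := (sameCycle_mul_swap h).symm.trans hxy'
    have hy := hinc.notMem_Ioc_of_sameCycle_left hab h hxy
    rw [mem_Ioc, not_and_or, not_lt, not_le] at hy
    have hσx : σ x = (σ * swap x b) b := by rw [mul_apply, swap_apply_right]
    rw [hσx]
    refine ⟨fun hxy => ?_, fun hwrap => (hinc b y hby).2 (hwrap.trans hab.le)⟩
    obtain ⟨h1, h2⟩ := (hinc b y hby).1 (hy.resolve_left hxy.not_ge)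
    exact ⟨hab.trans h1, h2⟩
  rcases eq_or_ne x b with rfl | hxb
  · have hy := hinc.mem_Ioc_of_sameCycle_right hab h hxy
    have hσx : σ x = (σ * swap a x) a := by rw [mul_apply, swap_apply_left]
    rw [hσx]
    exact ⟨fun hxy => absurd hy.2 hxy.not_ge,
      fun _ => ((hinc a y ((sameCycle_mul_swap h).trans hxy')).1 hy.1).2⟩
  · have hσx : σ x = (σ * swap a b) x := by rw [mul_apply, swap_apply_of_ne_of_ne hxa hxb]
    rw [hσx]
    exact hinc x y hxy'

theorem HasNoncrossingCycles.of_mul_swap (hnc : HasNoncrossingCycles (σ * swap a b))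
    (hinc : HasIncreasingCycles (σ * swap a b)) (hab : a < b) (h : ¬ σ.SameCycle a b) :
    HasNoncrossingCycles σ := by
  intro p q r s hpr hqs hpq hqr hrs
  rcases (hnc p q r s (hpr.mul_swap h) (hqs.mul_swap h) hpq hqr hrs).of_mul_swap with
    hpq' | ⟨hpa, hbq⟩ | ⟨hpb, haq⟩
  · exact hpq'
  · have hq := hinc.mem_Ioc_of_sameCycle_right hab h hbq
    have hs := hinc.mem_Ioc_of_sameCycle_right hab h (hbq.trans hqs)
    exact absurd ⟨hq.1.trans hqr, hrs.le.trans hs.2⟩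
      (hinc.notMem_Ioc_of_sameCycle_left hab h (hpa.symm.trans hpr))
  · have hp := hinc.mem_Ioc_of_sameCycle_right hab h hpb.symm
    have hr := hinc.mem_Ioc_of_sameCycle_right hab h (hpb.symm.trans hpr)
    exact absurd ⟨hp.1.trans hpq, hqr.le.trans hr.2⟩ (hinc.notMem_Ioc_of_sameCycle_left hab h haq)

end Noncrossing

section Chain

variable {n k : ℕ}

theorem gammaP_zero (τ : Fin k → Perm (Fin n)) : gammaP τ 0 = 1 := by
  simp [gammaP]

theorem gammaP_succ (τ : Fin k → Perm (Fin n)) (s : Fin k) :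
    gammaP τ (s + 1) = gammaP τ s * τ s := by
  rw [gammaP, gammaP, List.prod_take_succ _ _ (by simp), List.getElem_ofFn]

theorem gammaP_eq_prod (τ : Fin k → Perm (Fin n)) : gammaP τ k = (List.ofFn τ).prod := by
  rw [gammaP, List.take_of_length_le (by simp)]

theorem Nat.exists_not_and_succ {P : ℕ → Prop} (h0 : ¬ P 0) (hk : P k) :
    ∃ t : Fin k, ¬ P t ∧ P (t + 1) := by
  induction k with
  | zero => exact absurd hk h0
  | succ k ih =>
    by_cases h : P k
    · obtain ⟨t, ht⟩ := ih h
      exact ⟨t.castSucc, ht⟩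
    · exact ⟨Fin.last k, h, hk⟩

variable {g : ℕ → Perm (Fin n)} {i j : Fin k → Fin n}

theorem not_sameCycle_of_cycleCount_add_eq (h0 : g 0 = 1)
    (hstep : ∀ s : Fin k, g (s + 1) = g s * swap (i s) (j s))
    (hk : cycleCount (g k) + k = n) (s : Fin k) : ¬ (g s).SameCycle (i s) (j s) := by
  have hmono {t u : ℕ} (htu : t ≤ u) (huk : u ≤ k) :
      cycleCount (g t) + t ≤ cycleCount (g u) + u := by
    induction u, htu using Nat.le_induction with
    | base => rfl
    | succ u htu ih =>
      have hu : cycleCount (g u) ≤ cycleCount (g (u + 1)) + 1 := by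
        rw [hstep ⟨u, huk⟩]
        exact cycleCount_le_cycleCount_mul_swap_add_one _ _ _
      have := ih (by omega)
      omega
  intro hsc
  have hjoin := cycleCount_le_cycleCount_mul_swap hsc
  rw [← hstep] at hjoin
  have h1 := hmono (Nat.zero_le s) s.isLt.le
  have h2 := hmono (t := s + 1) s.isLt le_rfl
  rw [h0, cycleCount_one] at h1
  omega

structure IsMergingChain (g : ℕ → Perm (Fin n)) (i j : Fin k → Fin n) : Prop where
  zero : g 0 = 1
  step : ∀ s : Fin k, g (s + 1) = g s * swap (i s) (j s)
  lt : ∀ s, i s < j s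
  merge : ∀ s : Fin k, ¬ (g s).SameCycle (i s) (j s)

namespace IsMergingChain

theorem sameCycle_mono (hg : IsMergingChain g i j) {s t : ℕ} {x y : Fin n} (hst : s ≤ t)
    (htk : t ≤ k) (h : (g s).SameCycle x y) : (g t).SameCycle x y := by
  induction t, hst using Nat.le_induction with
  | base => exact h
  | succ t hst ih =>
    rw [hg.step ⟨t, htk⟩]
    exact (ih (by omega)).mul_swap (hg.merge ⟨t, htk⟩)

theorem exists_sameCycle_left (hg : IsMergingChain g i j) {s : ℕ} {x y : Fin n} (hs : s ≤ k)
    (h : (g s).SameCycle x y) (hxy : x ≠ y) : ∃ r, (g s).SameCycle x (i r) := by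
  induction s with
  | zero => exact absurd (sameCycle_one.1 (hg.zero ▸ h)) hxy
  | succ s ih =>
    have hmerge := hg.merge ⟨s, hs⟩
    rw [hg.step ⟨s, hs⟩] at h ⊢
    rcases h.of_mul_swap with h | ⟨hxi, -⟩ | ⟨hxj, -⟩
    · obtain ⟨r, hr⟩ := ih (by omega) h
      exact ⟨r, hr.mul_swap hmerge⟩
    · exact ⟨⟨s, hs⟩, hxi.mul_swap hmerge⟩
    · exact ⟨⟨s, hs⟩, (hxj.mul_swap hmerge).trans (sameCycle_mul_swap hmerge).symm⟩

theorem hasIncreasingCycles_and_hasNoncrossingCycles (hg : IsMergingChain g i j) (hn : 2 ≤ n)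
    (hend : g k = finRotate n) {s : ℕ} (hs : s ≤ k) :
    HasIncreasingCycles (g s) ∧ HasNoncrossingCycles (g s) := by
  induction hs using Nat.decreasingInduction with
  | self => exact hend ▸ ⟨hasIncreasingCycles_finRotate hn, hasNoncrossingCycles_finRotate hn⟩
  | of_succ s hs ih =>
    rw [hg.step ⟨s, hs⟩] at ih
    exact ⟨ih.1.of_mul_swap (hg.lt _) (hg.merge _), ih.2.of_mul_swap ih.1 (hg.lt _) (hg.merge _)⟩

theorem not_sameCycle_left_succ (hg : IsMergingChain g i j) {s : Fin k} {y : Fin n}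
    (hinc : HasIncreasingCycles (g s)) (hinc' : HasIncreasingCycles (g (s + 1)))
    (hy : (y : ℕ) = i s + 1) : ¬ (g s).SameCycle (i s) y := by
  intro h
  have h' : (g (s + 1)).SameCycle (i s) y := hg.step s ▸ h.mul_swap (hg.merge s)
  have hj : g (s + 1) (i s) = g s (j s) := by rw [hg.step s, mul_apply, swap_apply_left]
  rw [hinc'.apply_eq_of_val_eq_succ h' hy, ← hinc.apply_eq_of_val_eq_succ h hy] at hj
  exact (hg.lt s).ne ((g s).injective hj)

theorem exists_apply_le_left (hg : IsMergingChain g i j) {s : ℕ} {x : Fin n} (hs : s ≤ k)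
    (hinc : HasIncreasingCycles (g s)) (hx : g s x < x) : ∃ r, g s x ≤ i r := by
  obtain ⟨r, hr⟩ :=
    hg.exists_sameCycle_left hs (sameCycle_apply_right.2 (SameCycle.refl _ x)) hx.ne'
  exact ⟨r, (hinc x (i r) hr).2 hx.le⟩

theorem apply_succ_ne_of_gt (hg : IsMergingChain g i j) {l t : Fin k} {y : Fin n}
    (hnc : HasNoncrossingCycles (g t)) (hlt : l < t) (hlast : ∀ s, i s = i l → s ≤ l)
    (hy : (y : ℕ) = i l + 1) (hyj : y < j l) (hnot : ¬ (g t).SameCycle (i l) y) :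
    g (t + 1) (i l) ≠ y := by
  intro hA
  rw [hg.step t, mul_apply] at hA
  have hjt : j t = i l := by
    by_contra hjt
    have hit : i t ≠ i l := fun h => (hlast t h).not_gt hlt
    rw [swap_apply_of_ne_of_ne hit.symm (Ne.symm hjt)] at hA
    exact hnot (hA ▸ sameCycle_apply_right.2 (SameCycle.refl _ _))
  rw [← hjt, swap_apply_right] at hA
  have hiy : (g t).SameCycle (i t) y := hA ▸ sameCycle_apply_right.2 (SameCycle.refl _ _)
  have hjj : (g t).SameCycle (j t) (j l) := hjt ▸ hg.sameCycle_mono (s := l + 1) hlt t.isLt.le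
    (by rw [hg.step l]; exact sameCycle_mul_swap (hg.merge l))
  have hjy : j t < y := Fin.lt_def.2 (by omega)
  exact hnot (hjt ▸ (hnc _ _ _ _ hiy hjj (hg.lt t) hjy hyj).symm.trans hiy)

theorem val_right_eq_succ_of_max_left (hg : IsMergingChain g i j) (hn : 2 ≤ n)
    (hend : g k = finRotate n) (l : Fin k) (hmax : ∀ s, i s ≤ i l)
    (hlast : ∀ s, i s = i l → s ≤ l) : (j l : ℕ) = i l + 1 := by
  have hinc {s : ℕ} (hs : s ≤ k) :=
    (hg.hasIncreasingCycles_and_hasNoncrossingCycles hn hend hs).1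
  by_contra hne
  have hjl : (i l : ℕ) + 1 < j l := by
    have := Fin.lt_def.1 (hg.lt l)
    omega
  let m1 : Fin n := ⟨i l + 1, by omega⟩
  have hm1 : (m1 : ℕ) = i l + 1 := rfl
  obtain ⟨t, hnot, hjoin⟩ := Nat.exists_not_and_succ (P := fun t => (g t).SameCycle (i l) m1)
    (by rw [hg.zero, sameCycle_one]; exact Fin.ne_of_val_ne (by omega))
    (hend ▸ sameCycle_finRotate hn _ _)
  have hA : g (t + 1) (i l) = m1 := (hinc t.isLt).apply_eq_of_val_eq_succ hjoin hm1
  rcases lt_trichotomy t l with htl | rfl | hlt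
  · exact hg.not_sameCycle_left_succ (hinc l.isLt.le) (hinc l.isLt) hm1
      (hg.sameCycle_mono htl l.isLt.le hjoin)
  · rw [hg.step t, mul_apply, swap_apply_left] at hA
    obtain ⟨r, hr⟩ := hg.exists_apply_le_left t.isLt.le (hinc t.isLt.le)
      (show g t (j t) < j t from hA ▸ Fin.lt_def.2 hjl)
    have hrl := Fin.le_def.1 (hmax r)
    rw [hA, Fin.le_def] at hr
    omega
  · have hnc := (hg.hasIncreasingCycles_and_hasNoncrossingCycles hn hend t.isLt.le).2
    exact hg.apply_succ_ne_of_gt hnc hlt hlast hm1 hjl hnot hA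

end IsMergingChain

end Chain

/-- In a minimal factorisation γ = ((i₁ j₁),…,(i_{n−1} j_{n−1})) ∈ Σ_n(n−1) of the n-cycle,
at the last occurrence l of the largest i one has j_l = i_l + 1. -/
theorem stmt7 (n : ℕ) (hn : 2 ≤ n) (i j : Fin (n - 1) → Fin n) (hij : ∀ l, i l < j l)
    (hγ : (fun l => Equiv.swap (i l) (j l)) ∈ SigmaSet n (n - 1))
    (l : Fin (n - 1)) (hmax : ∀ s, i s ≤ i l) (hlast : ∀ s, i s = i l → s ≤ l) :
    (j l : ℕ) = (i l : ℕ) + 1 := by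
  obtain ⟨-, hnorm, hprec⟩ := hγ
  set τ : Fin (n - 1) → Perm (Fin n) := fun s => swap (i s) (j s)
  have hprod : (List.ofFn τ).prod = finRotate n :=
    eq_of_precLe_of_normPerm_eq (cycleCount_finRotate hn) hnorm hprec
  have hcount : cycleCount (gammaP τ (n - 1)) + (n - 1) = n := by
    have := cycleCount_le_card (List.ofFn τ).prod
    rw [gammaP_eq_prod]
    unfold normPerm at hnorm
    omega
  have hchain : IsMergingChain (gammaP τ) i j :=
    { zero := gammaP_zero τ
      step := gammaP_succ τ
      lt := hij
      merge := not_sameCycle_of_cycleCount_add_eq (gammaP_zero τ) (gammaP_succ τ) hcount }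
  exact hchain.val_right_eq_succ_of_max_left hn (by rw [gammaP_eq_prod, hprod]) l hmax hlast
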